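/- Let 𝐀 ⊆ ℝ^{m×n} be an interval matrix and 𝐛 ⊆ ℝᵐ, 𝐜 ⊆ ℝⁿ interval vectors. The worst optimal value f̄ (supremum over all scenarios of the scenario's optimal value, in the extended reals with +∞ for infeasible scenarios) of the interval linear program min c⊤x subject to Ax ≤ b (with A ∈ 𝐀, b ∈ 𝐛, c ∈ 𝐜) is equal to the worst optimal value of the transformed interval linear program min c₁⊤x⁺ − c₂⊤x⁻ subject to A₁x⁺ − A₂x⁻ ≤ b, x⁺ ≥ 0, x⁻ ≥ 0, where A₁, A₂ ∈ 𝐀 and c₁, c₂ ∈ 𝐜 are chosen independently and b ∈ 𝐛. -/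

import Mathlib

/-!
Both worst values equal the value `v` of the transformed program at the extreme scenario
`(A₁, A₂, b, c₁, c₂) = (Ā, A̲, b̲, c̄, c̲)`, which has the smallest feasible set and the largest
objective; every original scenario is dominated by it through `x = x⁺ - x⁻`.
Conversely, for `r < v` the system `Āx⁺ - A̲x⁻ ≤ b̲`, `c̄ᵀx⁺ - c̲ᵀx⁻ ≤ r`, `x± ≥ 0` is infeasible,
so Farkas' lemma gives `y, μ ≥ 0` with `yᵀA̲ + μc̲ ≤ 0 ≤ yᵀĀ + μc̄` and `b̲ᵀy + rμ < 0`.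
Interpolating column by column between the bounds yields a scenario `(A, c)` with
`yᵀA + μc = 0`, and weak duality bounds its optimal value (with `b = b̲`) below by `r`.
-/

open Matrix

/-- Entrywise order on real matrices. -/
def matLE {m n : ℕ} (A B : Matrix (Fin m) (Fin n) ℝ) : Prop := ∀ i j, A i j ≤ B i j

open PointedCone

section Farkas

variable {𝕜 M N : Type*} [Field 𝕜] [LinearOrder 𝕜] [IsStrictOrderedRing 𝕜]
  [AddCommGroup M] [Module 𝕜 M] [AddCommGroup N] [Module 𝕜 N] {p : M →ₗ[𝕜] N →ₗ[𝕜] 𝕜}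

theorem exists_mem_dual_neg_of_notMem_hull_image (hp : p.SeparatingLeft) {κ : Type*}
    (s : Finset κ) (v : κ → M) (b : M) (hb : b ∉ hull 𝕜 (v '' s)) :
    ∃ y ∈ dual p (v '' s), p b y < 0 := by
  classical
  induction s using Finset.induction_on generalizing v b with
  | empty =>
    have hb0 : b ≠ 0 := by simpa using hb
    obtain ⟨y, hy⟩ : ∃ y, p b y ≠ 0 := by
      by_contra! h; exact hb0 (hp b h)
    rcases hy.lt_or_gt with h | h
    · exact ⟨y, by simp, h⟩
    · exact ⟨-y, by simp, by simpa using h⟩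
  | insert k s _ ih =>
    rw [Finset.coe_insert, Set.image_insert_eq] at hb ⊢
    obtain ⟨y, hy, hby⟩ := ih v b fun h => hb (Submodule.span_mono (Set.subset_insert _ _) h)
    set a := v k
    by_cases hay : 0 ≤ p a y
    · exact ⟨y, by simpa [dual_insert, hay] using hy, hby⟩
    replace hay := not_le.1 hay
    -- Project along `a` onto `ker (p · y)` and recurse; a certificate `z` for the projected
    -- family lifts to `w` because `p x w = p (π x) z`.
    let π : M →ₗ[𝕜] M := LinearMap.id - ((p a y)⁻¹ • p.flip y).smulRight a
    have hπ : ∀ x, π x = x - (p x y / p a y) • a := fun x => by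
      simp [π, div_eq_inv_mul]
    by_cases hπb : π b ∈ hull 𝕜 ((π ∘ v) '' s)
    · rw [Set.image_comp] at hπb
      obtain ⟨c, hc, hπc⟩ :=
        (Submodule.map_span (π.restrictScalars {c : 𝕜 // 0 ≤ c}) (v '' s)).ge hπb
      have hcy : 0 ≤ p c y := by rw [← dual_hull] at hy; exact hy hc
      refine absurd (Submodule.mem_span_insert.2 ⟨⟨(p b y - p c y) / p a y,
        div_nonneg_of_nonpos (by linarith) hay.le⟩, c, hc, ?_⟩) hb
      simp only [LinearMap.coe_restrictScalars, hπ] at hπc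
      rw [Nonneg.mk_smul]
      linear_combination (norm := module) -hπc
    · obtain ⟨z, hz, hbz⟩ := ih (π ∘ v) (π b) hπb
      set w := z - (p a z / p a y) • y
      have hw : ∀ x, p x w = p (π x) z := fun x => by
        simp only [w, hπ, map_sub, map_smul, LinearMap.sub_apply, LinearMap.smul_apply,
          smul_eq_mul]
        field_simp
      refine ⟨w, ?_, by rwa [hw]⟩
      rintro x (rfl | ⟨j, hj, rfl⟩)
      · rw [hw, hπ, div_self hay.ne, one_smul, sub_self, map_zero, LinearMap.zero_apply]
      · rw [hw]; exact hz ⟨j, hj, rfl⟩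

theorem Matrix.exists_farkas_certificate {κ ι : Type*} [Fintype κ] [Fintype ι]
    (B : Matrix κ ι 𝕜) (d : κ → 𝕜) (h : ¬ ∃ x, 0 ≤ x ∧ B *ᵥ x ≤ d) :
    ∃ y, 0 ≤ y ∧ 0 ≤ y ᵥ* B ∧ d ⬝ᵥ y < 0 := by
  classical
  let v : ι ⊕ κ → κ → 𝕜 := Sum.elim (fun j => Bᵀ j) fun i => Pi.single i 1
  have hd : d ∉ hull 𝕜 (v '' (Finset.univ : Finset (ι ⊕ κ))) := by
    rw [Finset.coe_univ, Set.image_univ]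
    intro hd
    obtain ⟨c, rfl⟩ := (Submodule.mem_span_range_iff_exists_fun _).1 hd
    refine h ⟨fun j => c (.inl j), fun j => (c _).2, ?_⟩
    rw [Fintype.sum_sum_type]
    refine le_add_of_le_of_nonneg (le_of_eq ?_) (Finset.sum_nonneg fun i _ => ?_)
    · simp [v, mulVec_eq_sum, ← Nonneg.coe_smul]
    · rw [← Nonneg.coe_smul]
      exact smul_nonneg (c _).2 (Pi.single_nonneg.2 zero_le_one)
  have hsep : (dotProductBilin 𝕜 𝕜 : (κ → 𝕜) →ₗ[𝕜] (κ → 𝕜) →ₗ[𝕜] 𝕜).SeparatingLeft :=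
    fun x hx => funext fun i => by simpa using hx (Pi.single i 1)
  obtain ⟨y, hy, hdy⟩ := exists_mem_dual_neg_of_notMem_hull_image hsep Finset.univ v d hd
  refine ⟨y, fun i => ?_, fun j => ?_, hdy⟩
  · simpa [v] using hy ⟨.inr i, by simp, rfl⟩
  · exact (by simpa [v, dotProduct_comm] using hy ⟨.inl j, by simp, rfl⟩ : 0 ≤ y ⬝ᵥ Bᵀ j)

theorem Matrix.lt_dotProduct_of_vecMul_add_smul_eq_zero {κ ι : Type*} [Fintype κ] [Fintype ι]
    {A : Matrix κ ι 𝕜} {b y : κ → 𝕜} {c x : ι → 𝕜} {μ r : 𝕜} (hy : 0 ≤ y) (hμ : 0 ≤ μ)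
    (hyA : y ᵥ* A + μ • c = 0) (hb : b ⬝ᵥ y + r * μ < 0) (hx : A *ᵥ x ≤ b) : r < c ⬝ᵥ x := by
  have hle : y ⬝ᵥ (A *ᵥ x) ≤ b ⬝ᵥ y :=
    dotProduct_comm b y ▸ dotProduct_le_dotProduct_of_nonneg_left hx hy
  have heq : y ⬝ᵥ (A *ᵥ x) = -(μ * c ⬝ᵥ x) := by
    rw [dotProduct_mulVec, eq_neg_of_add_eq_zero_left hyA, neg_dotProduct, smul_dotProduct,
      smul_eq_mul]
  nlinarith

theorem Matrix.exists_certificate_of_not_exists_split_le {κ ι : Type*} [Fintype κ] [Fintype ι]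
    (A₁ A₂ : Matrix κ ι 𝕜) (b : κ → 𝕜) (c₁ c₂ : ι → 𝕜) (r : 𝕜)
    (h : ¬ ∃ x₁ x₂ : ι → 𝕜, 0 ≤ x₁ ∧ 0 ≤ x₂ ∧ A₁ *ᵥ x₁ - A₂ *ᵥ x₂ ≤ b ∧
      c₁ ⬝ᵥ x₁ - c₂ ⬝ᵥ x₂ ≤ r) :
    ∃ y μ, 0 ≤ y ∧ 0 ≤ μ ∧ 0 ≤ y ᵥ* A₁ + μ • c₁ ∧ y ᵥ* A₂ + μ • c₂ ≤ 0 ∧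
      b ⬝ᵥ y + r * μ < 0 := by
  obtain ⟨y, hy, hyB, hby⟩ := (fromBlocks A₁ (-A₂) (replicateRow Unit c₁)
    (-replicateRow Unit c₂)).exists_farkas_certificate (Sum.elim b fun _ => r) (by
      rintro ⟨x, hx, hBx⟩
      refine h ⟨x ∘ .inl, x ∘ .inr, fun _ => hx _, fun _ => hx _, fun i => ?_, ?_⟩
      · simpa [fromBlocks_mulVec, neg_mulVec, sub_eq_add_neg] using hBx (.inl i)
      · simpa [fromBlocks_mulVec, neg_mulVec, replicateRow_mulVec_eq_const, sub_eq_add_neg]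
          using hBx (.inr ()))
  refine ⟨y ∘ .inl, y (.inr ()), fun i => hy _, hy _, fun j => ?_, fun j => ?_, ?_⟩
  · simpa [vecMul_fromBlocks, vecMul, dotProduct] using hyB (.inl j)
  · have hyB₂ := hyB (.inr j)
    simp [vecMul, dotProduct] at hyB₂ ⊢
    linarith
  · simpa [dotProduct, Fintype.sum_sum_type, mul_comm] using hby

end Farkas

section IntervalLP

variable {m n : ℕ}

theorem mulVec_le_mulVec_of_matLE {A B : Matrix (Fin m) (Fin n) ℝ} (h : matLE A B)
    {x : Fin n → ℝ} (hx : 0 ≤ x) : A *ᵥ x ≤ B *ᵥ x :=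
  fun i => dotProduct_le_dotProduct_of_nonneg_right (h i) hx

theorem exists_matLE_vecMul_add_smul_eq_zero {Al Au : Matrix (Fin m) (Fin n) ℝ}
    {cl cu : Fin n → ℝ} (hA : matLE Al Au) (hc : cl ≤ cu) {y : Fin m → ℝ} {μ : ℝ}
    (hu : 0 ≤ y ᵥ* Au + μ • cu) (hl : y ᵥ* Al + μ • cl ≤ 0) :
    ∃ A c, matLE Al A ∧ matLE A Au ∧ cl ≤ c ∧ c ≤ cu ∧ y ᵥ* A + μ • c = 0 := by
  have hweights : ∀ j, ∃ s t : ℝ, 0 ≤ s ∧ 0 ≤ t ∧ s + t = 1 ∧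
      s • (y ᵥ* Al + μ • cl) j + t • (y ᵥ* Au + μ • cu) j = 0 :=
    fun j => Icc_subset_segment ⟨hl j, hu j⟩
  choose s t hs ht hst hzero using hweights
  have combo_mem {u w : ℝ} (h : u ≤ w) (j : Fin n) : s j * u + t j * w ∈ Set.Icc u w :=
    segment_subset_Icc h ⟨s j, t j, hs j, ht j, hst j, rfl⟩
  refine ⟨of fun i j => s j * Al i j + t j * Au i j, fun j => s j * cl j + t j * cu j,
    fun i j => (combo_mem (hA i j) j).1, fun i j => (combo_mem (hA i j) j).2,
    fun j => (combo_mem (hc j) j).1, fun j => (combo_mem (hc j) j).2, ?_⟩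
  ext j
  rw [Pi.zero_apply, ← hzero j]
  simp [vecMul, dotProduct, mul_add, Finset.sum_add_distrib, Finset.mul_sum, mul_left_comm]
  ring

noncomputable def lpValue (A : Matrix (Fin m) (Fin n) ℝ) (b : Fin m → ℝ) (c : Fin n → ℝ) :
    EReal :=
  ⨅ x : {x : Fin n → ℝ // A *ᵥ x ≤ b}, ((c ⬝ᵥ x.1 : ℝ) : EReal)

noncomputable def splitLpValue (A₁ A₂ : Matrix (Fin m) (Fin n) ℝ) (b : Fin m → ℝ)
    (c₁ c₂ : Fin n → ℝ) : EReal :=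
  ⨅ p : {p : (Fin n → ℝ) × (Fin n → ℝ) // A₁ *ᵥ p.1 - A₂ *ᵥ p.2 ≤ b ∧ 0 ≤ p.1 ∧ 0 ≤ p.2},
    ((c₁ ⬝ᵥ p.1.1 - c₂ ⬝ᵥ p.1.2 : ℝ) : EReal)

theorem lpValue_le_splitLpValue_self (A : Matrix (Fin m) (Fin n) ℝ) (b : Fin m → ℝ)
    (c : Fin n → ℝ) : lpValue A b c ≤ splitLpValue A A b c c :=
  le_iInf fun p => iInf_le_of_le ⟨p.1.1 - p.1.2, by rw [mulVec_sub]; exact p.2.1⟩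
    (by rw [dotProduct_sub])

theorem splitLpValue_le_splitLpValue {A₁ A₂ A₁' A₂' : Matrix (Fin m) (Fin n) ℝ}
    {b b' : Fin m → ℝ} {c₁ c₂ c₁' c₂' : Fin n → ℝ} (hA₁ : matLE A₁ A₁') (hA₂ : matLE A₂' A₂)
    (hb : b ≤ b') (hc₁ : c₁ ≤ c₁') (hc₂ : c₂' ≤ c₂) :
    splitLpValue A₁ A₂ b' c₁ c₂ ≤ splitLpValue A₁' A₂' b c₁' c₂' := by
  refine le_iInf fun ⟨(x₁, x₂), hx, hx₁, hx₂⟩ => iInf_le_of_le ⟨(x₁, x₂), ?_, hx₁, hx₂⟩ ?_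
  · exact (sub_le_sub (mulVec_le_mulVec_of_matLE hA₁ hx₁)
      (mulVec_le_mulVec_of_matLE hA₂ hx₂)).trans (hx.trans hb)
  · exact EReal.coe_le_coe_iff.2 (sub_le_sub (dotProduct_le_dotProduct_of_nonneg_right hc₁ hx₁)
      (dotProduct_le_dotProduct_of_nonneg_right hc₂ hx₂))

theorem exists_lt_lpValue_of_lt_splitLpValue {Al Au : Matrix (Fin m) (Fin n) ℝ}
    {bl : Fin m → ℝ} {cl cu : Fin n → ℝ} (hA : matLE Al Au) (hc : cl ≤ cu) {r : ℝ}
    (hr : (r : EReal) < splitLpValue Au Al bl cu cl) :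
    ∃ A c, matLE Al A ∧ matLE A Au ∧ cl ≤ c ∧ c ≤ cu ∧ (r : EReal) ≤ lpValue A bl c := by
  have hinfeasible : ¬ ∃ x₁ x₂ : Fin n → ℝ, 0 ≤ x₁ ∧ 0 ≤ x₂ ∧ Au *ᵥ x₁ - Al *ᵥ x₂ ≤ bl ∧
      cu ⬝ᵥ x₁ - cl ⬝ᵥ x₂ ≤ r := fun ⟨x₁, x₂, hx₁, hx₂, hx, hval⟩ =>
    hr.not_ge ((iInf_le _ ⟨(x₁, x₂), hx, hx₁, hx₂⟩).trans (EReal.coe_le_coe_iff.2 hval))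
  obtain ⟨y, μ, hy, hμ, hu, hl, hb⟩ :=
    exists_certificate_of_not_exists_split_le Au Al bl cu cl r hinfeasible
  obtain ⟨A, c, hAl, hAu, hcl, hcu, hyA⟩ := exists_matLE_vecMul_add_smul_eq_zero hA hc hu hl
  exact ⟨A, c, hAl, hAu, hcl, hcu, le_iInf fun x =>
    EReal.coe_le_coe_iff.2 (lt_dotProduct_of_vecMul_add_smul_eq_zero hy hμ hyA hb x.2).le⟩

end IntervalLP

/-- Substituting a difference of two non-negative variables for the free variables does not
change the worst optimal value of a minimization ILP. -/
theorem worst_value_nonneg_substitution (m n : ℕ) (Al Au : Matrix (Fin m) (Fin n) ℝ)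
    (bl bu : Fin m → ℝ) (cl cu : Fin n → ℝ)
    (hA : matLE Al Au) (hb : bl ≤ bu) (hc : cl ≤ cu) :
    (⨆ A : {A : Matrix (Fin m) (Fin n) ℝ // matLE Al A ∧ matLE A Au},
     ⨆ b : {b : Fin m → ℝ // bl ≤ b ∧ b ≤ bu},
     ⨆ c : {c : Fin n → ℝ // cl ≤ c ∧ c ≤ cu},
     ⨅ x : {x : Fin n → ℝ // A.1.mulVec x ≤ b.1},
       ((c.1 ⬝ᵥ x.1 : ℝ) : EReal)) =
    (⨆ A₁ : {A : Matrix (Fin m) (Fin n) ℝ // matLE Al A ∧ matLE A Au},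
     ⨆ A₂ : {A : Matrix (Fin m) (Fin n) ℝ // matLE Al A ∧ matLE A Au},
     ⨆ b : {b : Fin m → ℝ // bl ≤ b ∧ b ≤ bu},
     ⨆ c₁ : {c : Fin n → ℝ // cl ≤ c ∧ c ≤ cu},
     ⨆ c₂ : {c : Fin n → ℝ // cl ≤ c ∧ c ≤ cu},
     ⨅ p : {p : (Fin n → ℝ) × (Fin n → ℝ) //
         A₁.1.mulVec p.1 - A₂.1.mulVec p.2 ≤ b.1 ∧ 0 ≤ p.1 ∧ 0 ≤ p.2},
       ((c₁.1 ⬝ᵥ p.1.1 - c₂.1 ⬝ᵥ p.1.2 : ℝ) : EReal)) := by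
  have hAu : matLE Al Au ∧ matLE Au Au := ⟨hA, fun _ _ => le_rfl⟩
  have hAl : matLE Al Al ∧ matLE Al Au := ⟨fun _ _ => le_rfl, hA⟩
  apply le_antisymm <;> refine le_trans (b := splitLpValue Au Al bl cu cl) ?_ ?_
  · exact iSup_le fun A => iSup_le fun b => iSup_le fun c =>
      (lpValue_le_splitLpValue_self _ _ _).trans
        (splitLpValue_le_splitLpValue A.2.2 A.2.1 b.2.1 c.2.2 c.2.1)
  · exact le_iSup_of_le ⟨Au, hAu⟩ <| le_iSup_of_le ⟨Al, hAl⟩ <|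
      le_iSup_of_le ⟨bl, le_rfl, hb⟩ <| le_iSup_of_le ⟨cu, hc, le_rfl⟩ <|
      le_iSup_of_le ⟨cl, le_rfl, hc⟩ le_rfl
  · exact iSup_le fun A₁ => iSup_le fun A₂ => iSup_le fun b => iSup_le fun c₁ =>
      iSup_le fun c₂ => splitLpValue_le_splitLpValue A₁.2.2 A₂.2.1 b.2.1 c₁.2.2 c₂.2.1
  · refine EReal.ge_of_forall_gt_iff_ge.1 fun r hr => ?_
    obtain ⟨A, c, hAl, hAu, hcl, hcu, hr⟩ := exists_lt_lpValue_of_lt_splitLpValue hA hc hr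
    exact hr.trans <| le_iSup_of_le ⟨A, hAl, hAu⟩ <| le_iSup_of_le ⟨bl, le_rfl, hb⟩ <|
      le_iSup_of_le ⟨c, hcl, hcu⟩ le_rfl
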